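/- Let τ have relations R₁,…,R_m with arities r₁,…,r_m, let B be a finite τ-structure, and let B̲₀ be the random structure on B × [n] where each lift of each tuple (i.e., each tuple projecting coordinatewise to a relational tuple of B) is included independently with probability p_k = n^{1−k+1/g} for arity k. Then the expected number of relational tuples of B̲₀ lying on cycles of length at most g is O(|B|^{g(r−1)}·n), where r = max arity and the implied constant depends only on τ and g. -/

import Mathlib

open MeasureTheory ENNReal

/-- The tuple indexed by `c` is a relational tuple of the random lifted structure
determined by the sample `ω`. -/
def InRandomRel {ι β : Type} {arity : ι → ℕ} {n : ℕ}
    (RB : ∀ i, Set (Fin (arity i) → β))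
    (ω : (Σ i : ι, Fin (arity i) → β × Fin n) → Bool)
    (c : Σ i : ι, Fin (arity i) → β × Fin n) : Prop :=
  ω c = true ∧ (fun j => (c.2 j).1) ∈ RB c.1

/-- The relational tuple `c` lies on a cycle of length at most `g` of the random
lifted structure determined by `ω` (degenerate cycles of length 1 included). -/
def OnShortCycle {ι β : Type} {arity : ι → ℕ} {n : ℕ}
    (RB : ∀ i, Set (Fin (arity i) → β)) (g : ℕ)
    (ω : (Σ i : ι, Fin (arity i) → β × Fin n) → Bool)
    (c : Σ i : ι, Fin (arity i) → β × Fin n) : Prop :=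
  (1 ≤ g ∧ ¬ Function.Injective c.2) ∨
  (∃ s : ℕ, s + 2 ≤ g ∧
    ∃ (x : Fin (s + 2) → β × Fin n) (rr : Fin (s + 2) → Σ i : ι, Fin (arity i) → β × Fin n),
      Function.Injective x ∧ Function.Injective rr ∧
      (∀ m, InRandomRel RB ω (rr m)) ∧
      (∀ m : Fin (s + 2), (∃ j, (rr m).2 j = x m) ∧ (∃ j, (rr (m + 1)).2 j = x m)) ∧
      ∃ m, rr m = c)

/-!
A tuple of the random lift lies on a cycle of length at most `g` either because it has a repeated
coordinate or because it is one of the `L ≤ g` tuples of a cycle `x₀, r₁, x₁, …, r_L` of length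
`L`. Hence the number of such tuples is at most the number of degenerate tuples plus
`∑_L L · #(cycles of length L)`, and by linearity of expectation and independence it suffices to
sum `∏ p_{|rᵢ|}` over all cycle patterns in `B × [n]`. Fixing the `L` points, the tuples through
two given distinct points of arity `k` number at most `k² N^{k-2}` (`N = |B| n`), so each step of
the cycle contributes at most `φ / N` with `φ = ∑_k k² N^{k-1} p_k = ∑_k k² |B|^{k-1} n^{1/g}`,
and the `N^L` choices of points give `φ^L ≤ C |B|^{L(r-1)} n^{L/g}`; as `L ≤ g` this is
`O(|B|^{g(r-1)} n)`. The degenerate tuples have expected number at most `φ` by the same count.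
-/

open Finset Function

section Counting

variable {α β γ : Type*} [Fintype α] [DecidableEq α] [Fintype γ]

theorem card_le_pow_of_eqOn_compl (S : Finset α) (s : Finset (α → γ))
    (hs : ∀ f ∈ s, ∀ f' ∈ s, Set.EqOn f f' (↑S)ᶜ → f = f') :
    #s ≤ Fintype.card γ ^ (Fintype.card α - #S) := by
  have hinj : Set.InjOn (fun (f : α → γ) (i : {i // i ∉ S}) => f i) s :=
    fun f hf f' hf' h => hs f hf f' hf' fun i hi => congrFun h ⟨i, hi⟩
  calc #s ≤ #(univ : Finset ({i // i ∉ S} → γ)) :=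
        card_le_card_of_injOn _ (fun _ _ => mem_univ _) hinj
    _ = Fintype.card γ ^ (Fintype.card α - #S) := by
        simp [Fintype.card_subtype_compl]

theorem card_le_offDiag_mul_of_cover {k m : ℕ} (s : Finset β) (t : Fin k → Fin k → Finset β)
    (hst : ∀ x ∈ s, ∃ j j', j ≠ j' ∧ x ∈ t j j') (ht : ∀ j j', j ≠ j' → #(t j j') ≤ m) :
    #s ≤ (k * k - k) * m := by
  classical
  calc #s ≤ #((univ : Finset (Fin k)).offDiag.biUnion fun p => t p.1 p.2) :=
        card_le_card fun x hx => by
          obtain ⟨j, j', hjj', hx⟩ := hst x hx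
          exact mem_biUnion.2 ⟨(j, j'), by simpa using hjj', hx⟩
    _ ≤ ∑ p ∈ (univ : Finset (Fin k)).offDiag, #(t p.1 p.2) := card_biUnion_le
    _ ≤ (k * k - k) * m := by
        simpa [offDiag_card] using
          sum_le_card_nsmul (univ : Finset (Fin k)).offDiag _ m fun p hp =>
            ht p.1 p.2 (mem_offDiag.1 hp).2.2

variable [DecidableEq γ]

theorem card_filter_not_injective_le (k : ℕ) :
    #{f : Fin k → γ | ¬Injective f} ≤ (k * k - k) * Fintype.card γ ^ (k - 1) := by
  refine card_le_offDiag_mul_of_cover _ (fun j j' => {f | f j = f j'})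
    (fun f hf => ?_) fun j j' hjj' => ?_
  · obtain ⟨j, j', h, hne⟩ := not_injective_iff.1 (mem_filter.1 hf).2
    exact ⟨j, j', hne, by simpa using h⟩
  · simpa using card_le_pow_of_eqOn_compl {j'} _ fun f hf f' hf' h => funext fun i => by
      simp only [mem_filter, mem_univ, true_and] at hf hf'
      by_cases hi : i = j'
      · rw [hi, ← hf, ← hf', h (by simpa using hjj')]
      · exact h (by simpa using hi)

theorem card_mul_card_filter_mem_range_le {a b : γ} (hab : a ≠ b) (k : ℕ) :
    Fintype.card γ * #{f : Fin k → γ | a ∈ Set.range f ∧ b ∈ Set.range f}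
      ≤ (k * k - k) * Fintype.card γ ^ (k - 1) := by
  have hcard : #{f : Fin k → γ | a ∈ Set.range f ∧ b ∈ Set.range f}
      ≤ (k * k - k) * Fintype.card γ ^ (k - 2) := by
    refine card_le_offDiag_mul_of_cover _ (fun j j' => {f | f j = a ∧ f j' = b})
      (fun f hf => ?_) fun j j' hjj' => ?_
    · obtain ⟨⟨j, hj⟩, j', hj'⟩ := (mem_filter.1 hf).2
      exact ⟨j, j', by rintro rfl; exact hab (hj ▸ hj'), by simp [hj, hj']⟩
    · simpa [card_pair hjj'] using
        card_le_pow_of_eqOn_compl {j, j'} _ fun f hf f' hf' h => funext fun i => by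
          simp only [mem_filter, mem_univ, true_and] at hf hf'
          by_cases hi : i = j
          · rw [hi, hf.1, hf'.1]
          by_cases hi' : i = j'
          · rw [hi', hf.2, hf'.2]
          exact h (by simp [hi, hi'])
  rcases Nat.lt_or_ge k 2 with hk | hk
  · interval_cases k <;> simp_all
  · calc _ ≤ Fintype.card γ * ((k * k - k) * Fintype.card γ ^ (k - 2)) := by gcongr
      _ = (k * k - k) * Fintype.card γ ^ (k - 1) := by
        rw [mul_left_comm, ← pow_succ', show k - 2 + 1 = k - 1 by omega]

end Counting

section Tuples

variable {ι γ : Type*} [Fintype ι] [Fintype γ] (arity : ι → ℕ) (w : ℕ → ℝ)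

/-- `N` times the total weight of the tuples through two given distinct points of an `N`-element
set is at most this, and so is the total weight of the tuples with a repeated coordinate. -/
def pairWeightBound (N : ℕ) : ℝ :=
  ∑ i, ((arity i * arity i - arity i) * N ^ (arity i - 1) : ℕ) * w (arity i)

variable {arity w}

theorem pairWeightBound_nonneg (hw : ∀ k, 0 ≤ w k) (N : ℕ) : 0 ≤ pairWeightBound arity w N :=
  sum_nonneg fun _ _ => mul_nonneg (Nat.cast_nonneg _) (hw _)

theorem sum_filter_sigma_eq_sum_card_mul (P : (Σ i, Fin (arity i) → γ) → Prop) [DecidablePred P] :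
    ∑ c with P c, w (arity c.1) = ∑ i, (#{f | P ⟨i, f⟩} : ℝ) * w (arity i) := by
  rw [sum_filter, Fintype.sum_sigma]
  refine sum_congr rfl fun i _ => ?_
  rw [← sum_filter]
  simp only [sum_const, nsmul_eq_mul]

variable [DecidableEq γ]

theorem sum_filter_not_injective_le (hw : ∀ k, 0 ≤ w k) :
    ∑ c : Σ i, Fin (arity i) → γ with ¬Injective c.2, w (arity c.1)
      ≤ pairWeightBound arity w (Fintype.card γ) := by
  rw [sum_filter_sigma_eq_sum_card_mul]
  exact sum_le_sum fun i _ => mul_le_mul_of_nonneg_right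
    (by exact_mod_cast card_filter_not_injective_le (arity i)) (hw _)

theorem card_mul_sum_filter_mem_range_le (hw : ∀ k, 0 ≤ w k) {a b : γ} (hab : a ≠ b) :
    Fintype.card γ * ∑ t : Σ i, Fin (arity i) → γ with a ∈ Set.range t.2 ∧ b ∈ Set.range t.2,
      w (arity t.1) ≤ pairWeightBound arity w (Fintype.card γ) := by
  rw [sum_filter_sigma_eq_sum_card_mul, mul_sum]
  refine sum_le_sum fun i _ => ?_
  rw [← mul_assoc]
  exact mul_le_mul_of_nonneg_right
    (by exact_mod_cast card_mul_card_filter_mem_range_le hab (arity i)) (hw _)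

def IsTupleCycle {s : ℕ} (x : Fin (s + 2) → γ) (rr : Fin (s + 2) → Σ i, Fin (arity i) → γ) :
    Prop :=
  Injective x ∧ Injective rr ∧ ∀ m, x m ∈ Set.range (rr m).2 ∧ x m ∈ Set.range (rr (m + 1)).2

open Classical in
theorem sum_isTupleCycle_le_prod (hw : ∀ k, 0 ≤ w k) {s : ℕ} (x : Fin (s + 2) → γ) :
    ∑ rr : Fin (s + 2) → Σ i, Fin (arity i) → γ,
        (if IsTupleCycle x rr then ∏ m, w (arity (rr m).1) else 0)
      ≤ ∏ m, ∑ t : Σ i, Fin (arity i) → γ with x m ∈ Set.range t.2 ∧ x (m - 1) ∈ Set.range t.2,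
          w (arity t.1) := by
  rw [← sum_filter, prod_univ_sum]
  refine sum_le_sum_of_subset_of_nonneg (fun rr hrr => ?_)
    fun rr _ _ => prod_nonneg fun m _ => hw _
  obtain ⟨-, -, hadj⟩ := (mem_filter.1 hrr).2
  refine Fintype.mem_piFinset.2 fun m => mem_filter.2 ⟨mem_univ _, (hadj m).1, ?_⟩
  have := (hadj (m - 1)).2
  rwa [sub_add_cancel] at this

open Classical in
theorem sum_isTupleCycle_le (hw : ∀ k, 0 ≤ w k) (s : ℕ) :
    ∑ x : Fin (s + 2) → γ, ∑ rr : Fin (s + 2) → Σ i, Fin (arity i) → γ,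
        (if IsTupleCycle x rr then ∏ m, w (arity (rr m).1) else 0)
      ≤ pairWeightBound arity w (Fintype.card γ) ^ (s + 2) := by
  set φ := pairWeightBound arity w (Fintype.card γ)
  rcases isEmpty_or_nonempty γ with hγ | hγ
  · simpa using pow_nonneg (pairWeightBound_nonneg hw _) _
  have hN : (0 : ℝ) < Fintype.card γ := by exact_mod_cast Fintype.card_pos
  have hx : ∀ x : Fin (s + 2) → γ, ∑ rr : Fin (s + 2) → Σ i, Fin (arity i) → γ,
      (if IsTupleCycle x rr then ∏ m, w (arity (rr m).1) else 0)
        ≤ (φ / Fintype.card γ) ^ (s + 2) := by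
    intro x
    by_cases hinj : Injective x
    · refine (sum_isTupleCycle_le_prod hw x).trans ?_
      rw [← Fin.prod_const]
      refine prod_le_prod (fun m _ => sum_nonneg fun _ _ => hw _) fun m _ => ?_
      rw [le_div_iff₀' hN]
      exact card_mul_sum_filter_mem_range_le hw fun h => one_ne_zero (sub_eq_self.1 (hinj h).symm)
    · refine (sum_eq_zero fun rr _ => if_neg fun h => hinj h.1).trans_le ?_
      exact pow_nonneg (div_nonneg (pairWeightBound_nonneg hw _) hN.le) _
  calc _ ≤ ∑ _x : Fin (s + 2) → γ, (φ / Fintype.card γ) ^ (s + 2) := sum_le_sum fun x _ => hx x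
    _ = φ ^ (s + 2) := by
      rw [sum_const, card_univ, Fintype.card_fun, Fintype.card_fin, nsmul_eq_mul, div_pow]
      push_cast
      field_simp

end Tuples

section Probability

theorem lintegral_card_filter_eq_sum {α Ω : Type*} [Fintype α] [MeasurableSpace Ω]
    (μ : Measure Ω) (P : α → Ω → Prop) [∀ a ω, Decidable (P a ω)]
    (hP : ∀ a, MeasurableSet {ω | P a ω}) :
    ∫⁻ ω, (#{a | P a ω} : ℝ≥0∞) ∂μ = ∑ a, μ {ω | P a ω} := by
  have hind : ∀ ω, (#{a | P a ω} : ℝ≥0∞) = ∑ a, {ω | P a ω}.indicator 1 ω := by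
    intro ω
    rw [card_filter]
    push_cast
    simp only [Set.indicator_apply, Set.mem_ofPred_eq, Pi.one_apply]
  simp_rw [hind]
  rw [lintegral_finsetSum _ fun a _ => measurable_one.indicator (hP a)]
  exact sum_congr rfl fun a _ => lintegral_indicator_one (hP a)

theorem measure_pi_forall_eq_true {K L : Type*} [Fintype K] [Fintype L] (ν : K → Measure Bool)
    [∀ c, IsProbabilityMeasure (ν c)] {rr : L → K} (hrr : Injective rr) :
    Measure.pi ν {ω | ∀ m, ω (rr m) = true} = ∏ m, ν (rr m) {true} := by
  classical
  have hcyl : {ω : K → Bool | ∀ m, ω (rr m) = true}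
      = (↑(univ.image rr) : Set K).pi fun _ => {true} := by
    ext ω
    simp [Set.mem_pi]
  rw [hcyl, Measure.pi_pi_finset, prod_image fun _ _ _ _ h => hrr h]

variable {ι γ : Type*} [Fintype ι] [Fintype γ] [DecidableEq γ] {arity : ι → ℕ}
  (ν : (Σ i, Fin (arity i) → γ) → Measure Bool) [∀ c, IsProbabilityMeasure (ν c)] {w : ℕ → ℝ}

open Classical in
theorem lintegral_card_not_injective_le (hw : ∀ k, 0 ≤ w k)
    (hν : ∀ c, ν c {true} ≤ ENNReal.ofReal (w (arity c.1))) :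
    ∫⁻ ω, (#{c : Σ i, Fin (arity i) → γ | ¬Injective c.2 ∧ ω c = true} : ℝ≥0∞) ∂Measure.pi ν
      ≤ ENNReal.ofReal (pairWeightBound arity w (Fintype.card γ)) := by
  rw [lintegral_card_filter_eq_sum _ _ fun _ => .of_discrete]
  calc _ ≤ ∑ c : Σ i, Fin (arity i) → γ with ¬Injective c.2, ENNReal.ofReal (w (arity c.1)) := by
        rw [sum_filter]
        refine sum_le_sum fun c _ => ?_
        split_ifs with h
        · simp [h]
        · calc _ ≤ Measure.pi ν (eval c ⁻¹' {true}) := measure_mono fun ω hω => hω.2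
            _ = ν c {true} := (measurePreserving_eval ν c).measure_preimage
                (measurableSet_singleton _).nullMeasurableSet
            _ ≤ _ := hν c
    _ = ENNReal.ofReal (∑ c : Σ i, Fin (arity i) → γ with ¬Injective c.2, w (arity c.1)) :=
        (ofReal_sum_of_nonneg fun _ _ => hw _).symm
    _ ≤ _ := ofReal_le_ofReal (sum_filter_not_injective_le hw)

open Classical in
theorem lintegral_card_isTupleCycle_le (hw : ∀ k, 0 ≤ w k)
    (hν : ∀ c, ν c {true} ≤ ENNReal.ofReal (w (arity c.1))) (s : ℕ) :
    ∫⁻ ω, (#{xr : (Fin (s + 2) → γ) × (Fin (s + 2) → Σ i, Fin (arity i) → γ) |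
        IsTupleCycle xr.1 xr.2 ∧ ∀ m, ω (xr.2 m) = true} : ℝ≥0∞) ∂Measure.pi ν
      ≤ ENNReal.ofReal (pairWeightBound arity w (Fintype.card γ) ^ (s + 2)) := by
  rw [lintegral_card_filter_eq_sum _ _ fun _ => .of_discrete]
  calc _ ≤ ∑ xr : (Fin (s + 2) → γ) × (Fin (s + 2) → Σ i, Fin (arity i) → γ),
          ENNReal.ofReal (if IsTupleCycle xr.1 xr.2 then ∏ m, w (arity (xr.2 m).1) else 0) := by
        refine sum_le_sum fun xr _ => ?_
        split_ifs with h
        · rw [ofReal_prod_of_nonneg fun _ _ => hw _]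
          calc _ ≤ Measure.pi ν {ω | ∀ m, ω (xr.2 m) = true} := measure_mono fun ω hω => hω.2
            _ = _ := measure_pi_forall_eq_true ν h.2.1
            _ ≤ _ := prod_le_prod' fun m _ => hν _
        · simp [h]
    _ = ENNReal.ofReal (∑ x : Fin (s + 2) → γ, ∑ rr : Fin (s + 2) → Σ i, Fin (arity i) → γ,
          if IsTupleCycle x rr then ∏ m, w (arity (rr m).1) else 0) := by
        rw [← Fintype.sum_prod_type', ofReal_sum_of_nonneg]
        exact fun _ _ => by split_ifs <;> first | positivity | exact prod_nonneg fun _ _ => hw _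
    _ ≤ _ := ofReal_le_ofReal (sum_isTupleCycle_le hw s)

end Probability

section LiftedStructure

variable {ι β : Type} [Fintype ι] [Fintype β] {arity : ι → ℕ} {n : ℕ}

open Classical in
theorem card_onShortCycle_le (RB : ∀ i, Set (Fin (arity i) → β)) (g : ℕ)
    (ω : (Σ i : ι, Fin (arity i) → β × Fin n) → Bool) :
    Nat.card {c // InRandomRel RB ω c ∧ OnShortCycle RB g ω c}
      ≤ #{c : Σ i : ι, Fin (arity i) → β × Fin n | ¬Injective c.2 ∧ ω c = true}
        + ∑ s ∈ range (g - 1), (s + 2) *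
            #{xr : (Fin (s + 2) → β × Fin n) × (Fin (s + 2) → Σ i : ι, Fin (arity i) → β × Fin n) |
              IsTupleCycle xr.1 xr.2 ∧ ∀ m, ω (xr.2 m) = true} := by
  set cycles := fun s : ℕ =>
    ({xr : (Fin (s + 2) → β × Fin n) × (Fin (s + 2) → Σ i : ι, Fin (arity i) → β × Fin n) |
      IsTupleCycle xr.1 xr.2 ∧ ∀ m, ω (xr.2 m) = true} : Finset _)
  rw [Nat.card_eq_fintype_card, Fintype.card_subtype]
  calc _ ≤ #(({c | ¬Injective c.2 ∧ ω c = true} : Finset _) ∪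
          (range (g - 1)).biUnion fun s => (cycles s).biUnion fun xr => univ.image xr.2) := by
        refine card_le_card fun c hc => ?_
        obtain ⟨hc, ⟨-, hdeg⟩ | ⟨s, hs, x, rr, hx, hrr, hpresent, hadj, m, rfl⟩⟩ :=
          (mem_filter.1 hc).2
        · exact mem_union_left _ (mem_filter.2 ⟨mem_univ _, hdeg, hc.1⟩)
        · refine mem_union_right _ (mem_biUnion.2 ⟨s, mem_range.2 (by omega), ?_⟩)
          exact mem_biUnion.2 ⟨(x, rr), mem_filter.2 ⟨mem_univ _, ⟨hx, hrr, hadj⟩,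
            fun m => (hpresent m).1⟩, mem_image_of_mem _ (mem_univ m)⟩
    _ ≤ _ := by
        refine (card_union_le _ _).trans (add_le_add_right (card_biUnion_le.trans ?_) _)
        refine sum_le_sum fun s _ => card_biUnion_le.trans ?_
        rw [mul_comm, ← smul_eq_mul]
        exact sum_le_card_nsmul _ _ _ fun xr _ => card_image_le.trans (by simp)

theorem lintegral_card_onShortCycle_le (RB : ∀ i, Set (Fin (arity i) → β)) (g : ℕ)
    (ν : (Σ i : ι, Fin (arity i) → β × Fin n) → Measure Bool) [∀ c, IsProbabilityMeasure (ν c)]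
    {w : ℕ → ℝ} (hw : ∀ k, 0 ≤ w k) (hν : ∀ c, ν c {true} ≤ ENNReal.ofReal (w (arity c.1))) :
    ∫⁻ ω, (Nat.card {c // InRandomRel RB ω c ∧ OnShortCycle RB g ω c} : ℝ≥0∞) ∂Measure.pi ν
      ≤ ENNReal.ofReal (pairWeightBound arity w (Fintype.card (β × Fin n)) +
          ∑ s ∈ range (g - 1),
            (s + 2) * pairWeightBound arity w (Fintype.card (β × Fin n)) ^ (s + 2)) := by
  classical
  set φ := pairWeightBound arity w (Fintype.card (β × Fin n))
  calc _ ≤ ∫⁻ ω, ((#{c : Σ i, Fin (arity i) → β × Fin n | ¬Injective c.2 ∧ ω c = true} : ℝ≥0∞)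
          + ∑ s ∈ range (g - 1), ((s + 2 : ℕ) : ℝ≥0∞) *
            #{xr : (Fin (s + 2) → β × Fin n) × (Fin (s + 2) → Σ i : ι, Fin (arity i) → β × Fin n) |
              IsTupleCycle xr.1 xr.2 ∧ ∀ m, ω (xr.2 m) = true}) ∂Measure.pi ν :=
        lintegral_mono fun ω => by
          have := Nat.cast_le (α := ℝ≥0∞) |>.2 (card_onShortCycle_le RB g ω)
          push_cast at this ⊢
          exact this
    _ ≤ ENNReal.ofReal φ
          + ∑ s ∈ range (g - 1), ((s + 2 : ℕ) : ℝ≥0∞) * ENNReal.ofReal (φ ^ (s + 2)) := by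
        rw [lintegral_add_left .of_discrete, lintegral_finsetSum _ fun _ _ => .of_discrete]
        simp_rw [lintegral_const_mul _ Measurable.of_discrete]
        gcongr with s
        · exact lintegral_card_not_injective_le ν hw hν
        · exact lintegral_card_isTupleCycle_le ν hw hν s
    _ = _ := by
        have hφ : 0 ≤ φ := pairWeightBound_nonneg hw _
        rw [ofReal_add hφ (sum_nonneg fun _ _ => by positivity),
          ofReal_sum_of_nonneg fun _ _ => by positivity]
        refine congrArg _ (sum_congr rfl fun s _ => ?_)
        rw [ofReal_mul (by positivity)]
        exact_mod_cast congrArg (· * ENNReal.ofReal (φ ^ (s + 2))) (ofReal_natCast (s + 2)).symm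

end LiftedStructure

section Estimates

noncomputable def liftProb (n g k : ℕ) : ℝ := (n : ℝ) ^ ((1 : ℝ) - k + 1 / g)

theorem liftProb_nonneg (n g k : ℕ) : 0 ≤ liftProb n g k :=
  Real.rpow_nonneg (Nat.cast_nonneg n) _

theorem cast_mul_pow_pred_mul_rpow {b n : ℕ} (hn : 1 ≤ n) {k : ℕ} (hk : 1 ≤ k) (x : ℝ) :
    (((b * n) ^ (k - 1) : ℕ) : ℝ) * (n : ℝ) ^ ((1 : ℝ) - k + x) = b ^ (k - 1) * (n : ℝ) ^ x := by
  have hn0 : (0 : ℝ) < n := by exact_mod_cast hn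
  rw [Nat.cast_pow, Nat.cast_mul, mul_pow, mul_assoc, ← Real.rpow_natCast (n : ℝ) (k - 1),
    ← Real.rpow_add hn0, Nat.cast_sub hk]
  push_cast
  ring_nf

theorem pow_le_of_le_mul_rpow {φ : ℝ} {X n g L : ℕ} (hφ0 : 0 ≤ φ)
    (hφ : φ ≤ X * (n : ℝ) ^ (1 / (g : ℝ))) (hn : 1 ≤ n) (hL : 1 ≤ L) (hLg : L ≤ g) :
    φ ^ L ≤ X ^ g * n := by
  have hX : (X : ℝ) ^ L ≤ X ^ g := by
    rcases X.eq_zero_or_pos with rfl | hX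
    · simp [zero_pow (show L ≠ 0 by omega)]
    · exact pow_le_pow_right₀ (by exact_mod_cast hX) hLg
  have hnL : ((n : ℝ) ^ (1 / (g : ℝ))) ^ L ≤ n := by
    rw [← Real.rpow_natCast, ← Real.rpow_mul (Nat.cast_nonneg n)]
    conv_rhs => rw [← Real.rpow_one (n : ℝ)]
    refine Real.rpow_le_rpow_of_exponent_le (by exact_mod_cast hn) ?_
    rw [one_div_mul_eq_div, div_le_one (by norm_cast; omega)]
    exact_mod_cast hLg
  calc φ ^ L ≤ (X * (n : ℝ) ^ (1 / (g : ℝ))) ^ L := pow_le_pow_left₀ hφ0 hφ L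
    _ = X ^ L * ((n : ℝ) ^ (1 / (g : ℝ))) ^ L := mul_pow _ _ _
    _ ≤ X ^ g * n := by gcongr

theorem add_sum_range_mul_pow_le {φ M : ℝ} {g : ℕ} (hg : 1 ≤ g) (hφ : 0 ≤ φ)
    (h : ∀ L, 1 ≤ L → L ≤ g → φ ^ L ≤ M) :
    φ + ∑ s ∈ range (g - 1), (s + 2) * φ ^ (s + 2) ≤ (1 + g * g) * M := by
  have hM : 0 ≤ M := hφ.trans (by simpa using h 1 le_rfl hg)
  calc _ ≤ M + ∑ s ∈ range (g - 1), (g : ℝ) * M := by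
        refine add_le_add (by simpa using h 1 le_rfl hg) (sum_le_sum fun s hs => ?_)
        have hs : s + 2 ≤ g := by have := mem_range.1 hs; omega
        exact mul_le_mul (by exact_mod_cast hs) (h _ (by omega) hs) (by positivity)
          (Nat.cast_nonneg g)
    _ ≤ (1 + g * g) * M := by
        rw [sum_const, card_range, nsmul_eq_mul, Nat.cast_sub hg, Nat.cast_one]
        nlinarith [mul_nonneg (Nat.cast_nonneg g) hM]

variable {ι : Type*} [Fintype ι] (arity : ι → ℕ)

theorem pairWeightBound_liftProb_le {n : ℕ} (hn : 1 ≤ n) (b g : ℕ) :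
    pairWeightBound arity (liftProb n g) (b * n)
      ≤ ((∑ i, (arity i * arity i - arity i) : ℕ) : ℝ) * b ^ (univ.sup arity - 1)
          * (n : ℝ) ^ (1 / (g : ℝ)) := by
  rw [Nat.cast_sum, sum_mul, sum_mul]
  refine sum_le_sum fun i _ => ?_
  rcases Nat.lt_or_ge (arity i) 2 with hk | hk
  · have : arity i * arity i - arity i = 0 := by interval_cases arity i <;> rfl
    simp [this]
  have hpow : b ^ (arity i - 1) ≤ b ^ (univ.sup arity - 1) := by
    have hle : arity i ≤ univ.sup arity := le_sup (mem_univ i)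
    rcases b.eq_zero_or_pos with rfl | hb
    · simp [zero_pow (show arity i - 1 ≠ 0 by omega)]
    · exact Nat.pow_le_pow_right hb (by omega)
  rw [Nat.cast_mul, mul_assoc, liftProb, cast_mul_pow_pred_mul_rpow hn (by omega), ← mul_assoc]
  gcongr _ * ?_ * _
  exact_mod_cast hpow

theorem pairWeightBound_liftProb_pow_le {n : ℕ} (hn : 1 ≤ n) (b : ℕ) {g L : ℕ} (hL : 1 ≤ L)
    (hLg : L ≤ g) :
    pairWeightBound arity (liftProb n g) (b * n) ^ L
      ≤ ((∑ i, (arity i * arity i - arity i) : ℕ) + 1 : ℝ) ^ g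
          * b ^ (g * (univ.sup arity - 1)) * n := by
  have hφ : pairWeightBound arity (liftProb n g) (b * n)
      ≤ (((∑ i, (arity i * arity i - arity i)) + 1) * b ^ (univ.sup arity - 1) : ℕ)
          * (n : ℝ) ^ (1 / (g : ℝ)) := by
    refine (pairWeightBound_liftProb_le arity hn b g).trans ?_
    push_cast
    gcongr
    linarith
  refine (pow_le_of_le_mul_rpow (pairWeightBound_nonneg (liftProb_nonneg n g) _) hφ hn hL
    hLg).trans_eq ?_
  push_cast
  rw [mul_pow, ← pow_mul, mul_comm (univ.sup arity - 1)]

end Estimates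

theorem stmt15_general {ι : Type} [Fintype ι] (arity : ι → ℕ)
    (g : ℕ) (hg : 1 ≤ g) :
    ∃ C : ℝ, 0 < C ∧ ∀ (β : Type) (_ : Fintype β)
      (RB : ∀ i, Set (Fin (arity i) → β)) (n : ℕ), 1 ≤ n →
      ∫⁻ ω : (Σ i : ι, Fin (arity i) → β × Fin n) → Bool,
          (Nat.card {c : Σ i : ι, Fin (arity i) → β × Fin n //
            InRandomRel RB ω c ∧ OnShortCycle RB g ω c} : ℝ≥0∞)
          ∂(Measure.pi fun c : Σ i : ι, Fin (arity i) → β × Fin n =>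
              (PMF.bernoulli
                (min 1 (Real.toNNReal
                  ((n : ℝ) ^ ((1 : ℝ) - (arity c.1 : ℝ) + 1 / (g : ℝ)))))
                (min_le_left _ _)).toMeasure)
        ≤ ENNReal.ofReal
            (C * (Fintype.card β : ℝ) ^ (g * (Finset.univ.sup arity - 1)) * n) := by
  refine ⟨(1 + g * g) * ((∑ i, (arity i * arity i - arity i) : ℕ) + 1) ^ g, by positivity,
    fun β _ RB n hn => ?_⟩
  refine (lintegral_card_onShortCycle_le RB g _ (liftProb_nonneg n g) fun c => ?_).trans
    (ofReal_le_ofReal ?_)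
  · rw [PMF.toMeasure_apply_singleton _ _ (measurableSet_singleton _)]
    exact ENNReal.coe_le_coe.2 (min_le_right _ _)
  rw [Fintype.card_prod, Fintype.card_fin]
  refine (add_sum_range_mul_pow_le hg (pairWeightBound_nonneg (liftProb_nonneg n g) _)
    fun L hL hLg => pairWeightBound_liftProb_pow_le arity hn _ hL hLg).trans_eq ?_
  ring

/-- Expected-count computation from the proof of Theorem 5.1 of Kun–Nešetřil: in the
random lift `B̲₀` on `B × [n]`, where each lift of a tuple of arity `k` is included
independently with probability `p_k = n^{1-k+1/g}`, the expected number of relational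
tuples lying on cycles of length at most `g` is `O(|B|^{g(r-1)}·n)`, with the implied
constant depending only on the signature and `g`. -/
theorem stmt15 {ι : Type} [Fintype ι] (arity : ι → ℕ) (h1 : ∀ i, 1 ≤ arity i)
    (g : ℕ) (hg : 1 ≤ g) :
    ∃ C : ℝ, 0 < C ∧ ∀ (β : Type) (_ : Fintype β)
      (RB : ∀ i, Set (Fin (arity i) → β)) (n : ℕ), 1 ≤ n →
      ∫⁻ ω : (Σ i : ι, Fin (arity i) → β × Fin n) → Bool,
          (Nat.card {c : Σ i : ι, Fin (arity i) → β × Fin n //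
            InRandomRel RB ω c ∧ OnShortCycle RB g ω c} : ℝ≥0∞)
          ∂(Measure.pi fun c : Σ i : ι, Fin (arity i) → β × Fin n =>
              (PMF.bernoulli
                (min 1 (Real.toNNReal
                  ((n : ℝ) ^ ((1 : ℝ) - (arity c.1 : ℝ) + 1 / (g : ℝ)))))
                (min_le_left _ _)).toMeasure)
        ≤ ENNReal.ofReal
            (C * (Fintype.card β : ℝ) ^ (g * (Finset.univ.sup arity - 1)) * n) :=
  stmt15_general arity g hg
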